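/- arXiv:1905.01756 — 3 statements merged into one kernel-verified Lean document; each statement's English description precedes it below -/
import Mathlib

section
/- (Gap in discounted state distributions) Let μ and π be two policies on a finite MDP with transition kernel P and discount γ ∈ [0,1). Define the unnormalized discounted state distributions d^π(s) = ∑_{t≥0} γ^t P(s_t = s) under π from a fixed initial distribution, and similarly d^μ. If the total variation distance between π(·|s) and μ(·|s) is at most ε for every state s, then ‖d^π − d^μ‖₁ ≤ γ ε /(1−γ)². Combined with Pinsker's inequality, ‖d^π − d^μ‖₁ ≤ (2γ/(1−γ)²) · √((1/2) max_s KL(μ(·|s)‖π(·|s))). -/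
open Finset


private lemma dsd_hmono : MonotoneOn (fun t : ℝ => (t+1) * Real.log t - 2*(t-1)) (Set.Ioi 0) := by
  apply monotoneOn_of_deriv_nonneg (convex_Ioi 0)
  · fun_prop (disch := intro x hx; exact ne_of_gt (by simpa using hx))
  · intro x hx
    rw [interior_Ioi] at hx
    exact (( (hasDerivAt_id x).add_const 1).mul (Real.hasDerivAt_log (ne_of_gt hx)) |>.sub
      (((hasDerivAt_id x).sub_const 1).const_mul 2)).differentiableAt.differentiableWithinAt
  · intro x hx
    rw [interior_Ioi] at hx
    have hx0 : x ≠ 0 := ne_of_gt hx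
    have hd : HasDerivAt (fun t : ℝ => (t+1) * Real.log t - 2*(t-1))
        (1 * Real.log x + (x+1) * x⁻¹ - 2 * 1) x :=
      (((hasDerivAt_id x).add_const 1).mul (Real.hasDerivAt_log hx0)).sub
        (((hasDerivAt_id x).sub_const 1).const_mul 2)
    rw [hd.deriv]
    have h1 : Real.log x⁻¹ ≤ x⁻¹ - 1 := Real.log_le_sub_one_of_pos (inv_pos.2 hx)
    rw [Real.log_inv] at h1
    have : (x+1) * x⁻¹ = 1 + x⁻¹ := by field_simp
    rw [this]; linarith

private lemma dsd_key (t : ℝ) (ht : 0 ≤ t) :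
    (3/2) * (t-1)^2 ≤ (t+2) * (t * Real.log t - t + 1) := by
  set g : ℝ → ℝ := fun t => (t+2) * (t * Real.log t - t + 1) - (3/2)*(t-1)^2 with hg
  suffices h : 0 ≤ g t by simpa [hg] using h
  have hgderiv : ∀ x : ℝ, 0 < x → HasDerivAt g (2*((x+1)*Real.log x - 2*(x-1))) x := by
    intro x hx
    have hlog := Real.hasDerivAt_log (ne_of_gt hx)
    have h1 : HasDerivAt (fun t : ℝ => t * Real.log t - t + 1)
        (1 * Real.log x + x * x⁻¹ - 1) x :=
      (((hasDerivAt_id x).mul hlog).sub (hasDerivAt_id x)).add_const 1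
    have h2 : HasDerivAt g
        (1 * (x * Real.log x - x + 1) + (x+2) * (1 * Real.log x + x * x⁻¹ - 1)
          - (3/2) * (2*(x-1)^1*1)) x :=
      (((hasDerivAt_id x).add_const 2).mul h1).sub
        ((((hasDerivAt_id x).sub_const 1).pow 2).const_mul (3/2))
    convert h2 using 1
    field_simp
    ring
  have hgcont : Continuous g := by
    have := Real.continuous_mul_log
    fun_prop
  have hg1 : g 1 = 0 := by simp [hg]
  rcases eq_or_lt_of_le ht with h0 | htpos
  · simp [hg, ← h0]; norm_num
  rcases le_total t 1 with h1 | h1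
  · have hanti : AntitoneOn g (Set.Icc 0 1) := by
      apply antitoneOn_of_deriv_nonpos (convex_Icc 0 1) hgcont.continuousOn
      · intro x hx
        rw [interior_Icc] at hx
        exact (hgderiv x hx.1).differentiableAt.differentiableWithinAt
      · intro x hx
        rw [interior_Icc] at hx
        rw [(hgderiv x hx.1).deriv]
        have hh := dsd_hmono (Set.mem_Ioi.2 hx.1) (Set.mem_Ioi.2 one_pos) (le_of_lt hx.2)
        simp only [Real.log_one] at hh
        nlinarith
    have := hanti (Set.mem_Icc.2 ⟨ht, h1⟩) (Set.mem_Icc.2 ⟨zero_le_one, le_refl 1⟩) h1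
    linarith [hg1 ▸ this]
  · have hmono' : MonotoneOn g (Set.Ici 1) := by
      apply monotoneOn_of_deriv_nonneg (convex_Ici 1) hgcont.continuousOn
      · intro x hx
        rw [interior_Ici] at hx
        exact (hgderiv x (lt_trans one_pos hx)).differentiableAt.differentiableWithinAt
      · intro x hx
        rw [interior_Ici] at hx
        rw [(hgderiv x (lt_trans one_pos hx)).deriv]
        have hh := dsd_hmono (Set.mem_Ioi.2 one_pos) (Set.mem_Ioi.2 (lt_trans one_pos hx))
          (le_of_lt hx)
        simp only [Real.log_one] at hh
        nlinarith
    have := hmono' (Set.mem_Ici.2 (le_refl 1)) (Set.mem_Ici.2 h1) h1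
    linarith [hg1 ▸ this]

private lemma dsd_pointwise (p q : ℝ) (hp : 0 < p) (hq : 0 ≤ q) :
    (3/2) * (q - p)^2 / (q + 2*p) ≤ q * Real.log (q / p) - q + p := by
  have hkey := dsd_key (q/p) (div_nonneg hq (le_of_lt hp))
  set L := Real.log (q / p) with hL
  have hqp : (0:ℝ) < q + 2*p := by linarith
  rw [div_le_iff₀ hqp]
  have h1 : p*p*((3/2)*(q/p-1)^2) = (3/2)*(q-p)^2 := by field_simp
  have h2 : p*p*((q/p + 2)*((q/p)*L - q/p + 1)) = (q*L - q + p)*(q+2*p) := by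
    field_simp
  have := mul_le_mul_of_nonneg_left hkey (le_of_lt (mul_pos hp hp))
  rw [h1, h2] at this
  exact this

private lemma dsd_pinsker {A : Type*} [Fintype A] (p q : A → ℝ)
    (hp : ∀ a, 0 < p a) (hps : ∑ a, p a = 1)
    (hq : ∀ a, 0 ≤ q a) (hqs : ∑ a, q a = 1) :
    (∑ a, |p a - q a|)^2 ≤ 2 * ∑ a, q a * Real.log (q a / p a) := by
  have hpt : ∀ a, (3/2) * (q a - p a)^2 / (q a + 2*(p a)) ≤
      q a * Real.log (q a / p a) - q a + p a := fun a => dsd_pointwise _ _ (hp a) (hq a)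
  have hKL : ∑ a, q a * Real.log (q a / p a)
      = ∑ a, (q a * Real.log (q a / p a) - q a + p a) := by
    rw [Finset.sum_add_distrib, Finset.sum_sub_distrib, hps, hqs]; ring
  have hstep : (3/2) * ∑ a, (q a - p a)^2 / (q a + 2*(p a))
      ≤ ∑ a, q a * Real.log (q a / p a) := by
    rw [hKL, Finset.mul_sum]
    apply Finset.sum_le_sum
    intro a _
    calc (3/2) * ((q a - p a)^2 / (q a + 2*(p a)))
        = (3/2) * (q a - p a)^2 / (q a + 2*(p a)) := by ring
      _ ≤ _ := hpt a
  have hden : ∀ a, (0:ℝ) < q a + 2*(p a) := fun a => by have := hp a; have := hq a; linarith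
  have hCS : (∑ a, |p a - q a|)^2
      ≤ (∑ a, (q a - p a)^2 / (q a + 2*(p a))) * (∑ a, (q a + 2*(p a))) := by
    have := Finset.sum_mul_sq_le_sq_mul_sq Finset.univ
      (fun a => |q a - p a| / Real.sqrt (q a + 2*(p a)))
      (fun a => Real.sqrt (q a + 2*(p a)))
    have e1 : ∀ a : A, |q a - p a| / Real.sqrt (q a + 2*(p a)) * Real.sqrt (q a + 2*(p a))
        = |p a - q a| := by
      intro a
      rw [div_mul_cancel₀ _ (Real.sqrt_ne_zero'.2 (hden a))]
      exact abs_sub_comm _ _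
    have e2 : ∀ a : A, (|q a - p a| / Real.sqrt (q a + 2*(p a)))^2
        = (q a - p a)^2 / (q a + 2*(p a)) := by
      intro a
      rw [div_pow, sq_abs, Real.sq_sqrt (le_of_lt (hden a))]
    have e3 : ∀ a : A, (Real.sqrt (q a + 2*(p a)))^2 = q a + 2*(p a) := fun a =>
      Real.sq_sqrt (le_of_lt (hden a))
    simp only [e1, e2, e3] at this
    exact this
  have hsum3 : ∑ a, (q a + 2*(p a)) = 3 := by
    rw [Finset.sum_add_distrib, hqs, ← Finset.mul_sum, hps]; norm_num
  rw [hsum3] at hCS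
  have hnn : 0 ≤ ∑ a, (q a - p a)^2 / (q a + 2*(p a)) := by
    apply Finset.sum_nonneg; intro a _
    exact div_nonneg (sq_nonneg _) (le_of_lt (hden a))
  nlinarith [hCS, hstep]

/-- Gap in discounted state distributions. For a finite MDP with transition
kernel `P`, policies `π` and `μ`, initial distribution `d⁰` and discount
`γ ∈ [0,1)`, let `d^π(s) = ∑_{t≥0} γ^t ℙ(s_t = s)` denote the unnormalized
discounted state distribution under `π` (and similarly `d^μ`). If the total
variation distance between `π(·|s)` and `μ(·|s)` is at most `ε` for all `s`,
then `‖d^π − d^μ‖₁ ≤ γ ε / (1−γ)²`; combined with Pinsker's inequality,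
`‖d^π − d^μ‖₁ ≤ (2γ/(1−γ)²) √((1/2) max_s KL(μ(·|s) ‖ π(·|s)))`. -/
theorem discounted_state_distribution_gap
    {S A : Type*} [Fintype S] [Fintype A] [Nonempty S]
    (P : S → A → S → ℝ) (hP_nonneg : ∀ s a s', 0 ≤ P s a s')
    (hP_sum : ∀ s a, ∑ s', P s a s' = 1)
    (π μ : S → A → ℝ)
    (hπ_pos : ∀ s a, 0 < π s a) (hπ_sum : ∀ s, ∑ a, π s a = 1)
    (hμ_nonneg : ∀ s a, 0 ≤ μ s a) (hμ_sum : ∀ s, ∑ a, μ s a = 1)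
    (d0 : S → ℝ) (hd0_nonneg : ∀ s, 0 ≤ d0 s) (hd0_sum : ∑ s, d0 s = 1)
    (γ ε : ℝ) (hγ : 0 ≤ γ) (hγ1 : γ < 1)
    -- the Markov kernels induced by the policies
    (Kπ Kμ : S → S → ℝ)
    (hKπ : ∀ s s', Kπ s s' = ∑ a, π s a * P s a s')
    (hKμ : ∀ s s', Kμ s s' = ∑ a, μ s a * P s a s')
    -- the time-`t` state marginals
    (dπ dμ : ℕ → S → ℝ)
    (hdπ0 : dπ 0 = d0) (hdμ0 : dμ 0 = d0)
    (hdπ : ∀ t s', dπ (t + 1) s' = ∑ s, dπ t s * Kπ s s')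
    (hdμ : ∀ t s', dμ (t + 1) s' = ∑ s, dμ t s * Kμ s s')
    -- the unnormalized discounted state distributions
    (Dπ Dμ : S → ℝ)
    (hDπ : ∀ s, Dπ s = ∑' t : ℕ, γ ^ t * dπ t s)
    (hDμ : ∀ s, Dμ s = ∑' t : ℕ, γ ^ t * dμ t s)
    -- total variation bound between the policies
    (hTV : ∀ s, ∑ a, |π s a - μ s a| ≤ ε) :
    ∑ s, |Dπ s - Dμ s| ≤ γ * ε / (1 - γ) ^ 2 ∧
    ∑ s, |Dπ s - Dμ s| ≤ (2 * γ / (1 - γ) ^ 2) *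
      Real.sqrt ((1 / 2) *
        (Finset.univ.sup' Finset.univ_nonempty
          fun s => ∑ a, μ s a * Real.log (μ s a / π s a))) := by
  have hγabs : ‖γ‖ < 1 := by rw [Real.norm_eq_abs, abs_lt]; constructor <;> linarith
  -- kernel properties
  have hKπ_nonneg : ∀ s s', 0 ≤ Kπ s s' := fun s s' => by
    rw [hKπ]; exact Finset.sum_nonneg fun a _ =>
      mul_nonneg (le_of_lt (hπ_pos s a)) (hP_nonneg s a s')
  have hKμ_nonneg : ∀ s s', 0 ≤ Kμ s s' := fun s s' => by
    rw [hKμ]; exact Finset.sum_nonneg fun a _ =>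
      mul_nonneg (hμ_nonneg s a) (hP_nonneg s a s')
  have hKπ_row : ∀ s, ∑ s', Kπ s s' = 1 := by
    intro s
    simp only [hKπ]
    rw [Finset.sum_comm]
    calc ∑ a, ∑ s', π s a * P s a s' = ∑ a, π s a * ∑ s', P s a s' := by
          simp [Finset.mul_sum]
      _ = 1 := by simp [hP_sum, hπ_sum]
  -- marginals are probability distributions
  have hdπ_prop : ∀ t, (∀ s, 0 ≤ dπ t s) ∧ ∑ s, dπ t s = 1 := by
    intro t
    induction t with
    | zero => exact ⟨fun s => hdπ0 ▸ hd0_nonneg s, hdπ0 ▸ hd0_sum⟩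
    | succ t ih =>
      constructor
      · intro s'
        rw [hdπ]
        exact Finset.sum_nonneg fun s _ => mul_nonneg (ih.1 s) (hKπ_nonneg s s')
      · simp only [hdπ]
        rw [Finset.sum_comm]
        calc ∑ s, ∑ s', dπ t s * Kπ s s' = ∑ s, dπ t s * ∑ s', Kπ s s' := by
              simp [Finset.mul_sum]
          _ = 1 := by simp only [hKπ_row, mul_one]; exact ih.2
  have hKμ_row : ∀ s, ∑ s', Kμ s s' = 1 := by
    intro s
    simp only [hKμ]
    rw [Finset.sum_comm]
    calc ∑ a, ∑ s', μ s a * P s a s' = ∑ a, μ s a * ∑ s', P s a s' := by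
          simp [Finset.mul_sum]
      _ = 1 := by simp [hP_sum, hμ_sum]
  have hdμ_prop : ∀ t, (∀ s, 0 ≤ dμ t s) ∧ ∑ s, dμ t s = 1 := by
    intro t
    induction t with
    | zero => exact ⟨fun s => hdμ0 ▸ hd0_nonneg s, hdμ0 ▸ hd0_sum⟩
    | succ t ih =>
      constructor
      · intro s'
        rw [hdμ]
        exact Finset.sum_nonneg fun s _ => mul_nonneg (ih.1 s) (hKμ_nonneg s s')
      · simp only [hdμ]
        rw [Finset.sum_comm]
        calc ∑ s, ∑ s', dμ t s * Kμ s s' = ∑ s, dμ t s * ∑ s', Kμ s s' := by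
              simp [Finset.mul_sum]
          _ = 1 := by simp only [hKμ_row, mul_one]; exact ih.2
  have hdπ_le1 : ∀ t s, dπ t s ≤ 1 := by
    intro t s
    rw [← (hdπ_prop t).2]
    exact Finset.single_le_sum (fun s _ => (hdπ_prop t).1 s) (Finset.mem_univ s)
  have hdμ_le1 : ∀ t s, dμ t s ≤ 1 := by
    intro t s
    rw [← (hdμ_prop t).2]
    exact Finset.single_le_sum (fun s _ => (hdμ_prop t).1 s) (Finset.mem_univ s)
  -- summability
  have hgeo : Summable (fun t : ℕ => γ ^ t) := summable_geometric_of_lt_one hγ hγ1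
  have hsummπ : ∀ s, Summable (fun t : ℕ => γ ^ t * dπ t s) := by
    intro s
    refine Summable.of_nonneg_of_le
      (fun t => mul_nonneg (pow_nonneg hγ t) ((hdπ_prop t).1 s))
      (fun t => ?_) hgeo
    calc γ ^ t * dπ t s ≤ γ ^ t * 1 :=
          mul_le_mul_of_nonneg_left (hdπ_le1 t s) (pow_nonneg hγ t)
      _ = γ ^ t := mul_one _
  have hsummμ : ∀ s, Summable (fun t : ℕ => γ ^ t * dμ t s) := by
    intro s
    refine Summable.of_nonneg_of_le
      (fun t => mul_nonneg (pow_nonneg hγ t) ((hdμ_prop t).1 s))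
      (fun t => ?_) hgeo
    calc γ ^ t * dμ t s ≤ γ ^ t * 1 :=
          mul_le_mul_of_nonneg_left (hdμ_le1 t s) (pow_nonneg hγ t)
      _ = γ ^ t := mul_one _
  have hsummabs : ∀ s, Summable (fun t : ℕ => γ ^ t * |dπ t s - dμ t s|) := by
    intro s
    refine Summable.of_nonneg_of_le
      (fun t => mul_nonneg (pow_nonneg hγ t) (abs_nonneg _))
      (fun t => ?_) (hgeo.mul_left 2)
    have : |dπ t s - dμ t s| ≤ 2 := by
      rw [abs_sub_le_iff]
      constructor <;> nlinarith [(hdπ_prop t).1 s, (hdμ_prop t).1 s, hdπ_le1 t s, hdμ_le1 t s]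
    calc γ ^ t * |dπ t s - dμ t s| ≤ γ ^ t * 2 :=
          mul_le_mul_of_nonneg_left this (pow_nonneg hγ t)
      _ = 2 * γ ^ t := by ring
  have hsumNgeo : Summable (fun t : ℕ => (t : ℝ) * γ ^ t) :=
    (hasSum_coe_mul_geometric_of_norm_lt_one hγabs).summable
  -- the main bound, for an arbitrary TV bound e
  have main : ∀ e : ℝ, (∀ s, ∑ a, |π s a - μ s a| ≤ e) →
      ∑ s, |Dπ s - Dμ s| ≤ γ * e / (1 - γ) ^ 2 := by
    intro e hTVe
    have hKdiff : ∀ s, ∑ s', |Kπ s s' - Kμ s s'| ≤ e := by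
      intro s
      have hterm : ∀ s', |Kπ s s' - Kμ s s'| ≤ ∑ a, |π s a - μ s a| * P s a s' := by
        intro s'
        rw [hKπ, hKμ, ← Finset.sum_sub_distrib]
        refine (Finset.abs_sum_le_sum_abs _ _).trans (Finset.sum_le_sum fun a _ => ?_)
        rw [← sub_mul, abs_mul, abs_of_nonneg (hP_nonneg s a s')]
      calc ∑ s', |Kπ s s' - Kμ s s'| ≤ ∑ s', ∑ a, |π s a - μ s a| * P s a s' :=
            Finset.sum_le_sum fun s' _ => hterm s'
        _ = ∑ a, |π s a - μ s a| * ∑ s', P s a s' := by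
            rw [Finset.sum_comm]; simp [Finset.mul_sum]
        _ = ∑ a, |π s a - μ s a| := by simp [hP_sum]
        _ ≤ e := hTVe s
    have herr : ∀ t : ℕ, ∑ s, |dπ t s - dμ t s| ≤ t * e := by
      intro t
      induction t with
      | zero => simp [hdπ0, hdμ0]
      | succ t ih =>
        have step : ∑ s', |dπ (t+1) s' - dμ (t+1) s'|
            ≤ (∑ s, |dπ t s - dμ t s|) + e := by
          calc ∑ s', |dπ (t+1) s' - dμ (t+1) s'|
              = ∑ s', |∑ s, ((dπ t s - dμ t s) * Kπ s s' + dμ t s * (Kπ s s' - Kμ s s'))| := by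
                refine Finset.sum_congr rfl fun s' _ => ?_
                rw [hdπ, hdμ, ← Finset.sum_sub_distrib]
                congr 1
                exact Finset.sum_congr rfl fun s _ => by ring
            _ ≤ ∑ s', ∑ s,
                  (|dπ t s - dμ t s| * Kπ s s' + dμ t s * |Kπ s s' - Kμ s s'|) := by
                refine Finset.sum_le_sum fun s' _ => ?_
                refine (Finset.abs_sum_le_sum_abs _ _).trans
                  (Finset.sum_le_sum fun s _ => ?_)
                refine (abs_add_le _ _).trans ?_
                rw [abs_mul, abs_mul, abs_of_nonneg (hKπ_nonneg s s'),
                  abs_of_nonneg ((hdμ_prop t).1 s)]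
            _ = ∑ s, (|dπ t s - dμ t s| * (∑ s', Kπ s s')
                  + dμ t s * ∑ s', |Kπ s s' - Kμ s s'|) := by
                rw [Finset.sum_comm]
                refine Finset.sum_congr rfl fun s _ => ?_
                rw [Finset.sum_add_distrib, Finset.mul_sum, Finset.mul_sum]
            _ ≤ ∑ s, (|dπ t s - dμ t s| * 1 + dμ t s * e) := by
                refine Finset.sum_le_sum fun s _ => ?_
                refine add_le_add (le_of_eq ?_)
                  (mul_le_mul_of_nonneg_left (hKdiff s) ((hdμ_prop t).1 s))
                rw [hKπ_row s]
            _ = (∑ s, |dπ t s - dμ t s|) + e := by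
                rw [Finset.sum_add_distrib]
                have h9 : ∑ x, dμ t x * e = e := by
                  rw [← Finset.sum_mul, (hdμ_prop t).2, one_mul]
                rw [h9]
                simp
        calc ∑ s', |dπ (t+1) s' - dμ (t+1) s'| ≤ (∑ s, |dπ t s - dμ t s|) + e := step
          _ ≤ t * e + e := by linarith
          _ = ((t : ℕ) + 1 : ℝ) * e := by ring
          _ = ((t + 1 : ℕ) : ℝ) * e := by push_cast; ring
    have he0 : 0 ≤ e :=
      le_trans (Finset.sum_nonneg fun a _ => abs_nonneg _) (hTVe (Classical.arbitrary S))
    have habs : ∀ s, |Dπ s - Dμ s| ≤ ∑' t : ℕ, γ ^ t * |dπ t s - dμ t s| := by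
      intro s
      rw [hDπ, hDμ, ← Summable.tsum_sub (hsummπ s) (hsummμ s)]
      have heq : ∀ t : ℕ, γ ^ t * dπ t s - γ ^ t * dμ t s = γ ^ t * (dπ t s - dμ t s) :=
        fun t => by ring
      simp only [heq]
      have := norm_tsum_le_tsum_norm (f := fun t : ℕ => γ ^ t * (dπ t s - dμ t s)) ?_
      · simp only [Real.norm_eq_abs, abs_mul, abs_pow, abs_of_nonneg hγ] at this
        exact this
      · simp only [Real.norm_eq_abs, abs_mul, abs_pow, abs_of_nonneg hγ]
        exact hsummabs s
    have hsumRHS : Summable (fun t : ℕ => e * ((t : ℝ) * γ ^ t)) := hsumNgeo.mul_left e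
    have hbound : ∀ t : ℕ, γ ^ t * ∑ s, |dπ t s - dμ t s| ≤ e * ((t : ℝ) * γ ^ t) := by
      intro t
      calc γ ^ t * ∑ s, |dπ t s - dμ t s| ≤ γ ^ t * ((t : ℝ) * e) :=
            mul_le_mul_of_nonneg_left (herr t) (pow_nonneg hγ t)
        _ = e * ((t : ℝ) * γ ^ t) := by ring
    have hsumLHS : Summable (fun t : ℕ => γ ^ t * ∑ s, |dπ t s - dμ t s|) :=
      Summable.of_nonneg_of_le
        (fun t => mul_nonneg (pow_nonneg hγ t)
          (Finset.sum_nonneg fun s _ => abs_nonneg _)) hbound hsumRHS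
    calc ∑ s, |Dπ s - Dμ s| ≤ ∑ s, ∑' t : ℕ, γ ^ t * |dπ t s - dμ t s| :=
          Finset.sum_le_sum fun s _ => habs s
      _ = ∑' t : ℕ, ∑ s, γ ^ t * |dπ t s - dμ t s| :=
          (Summable.tsum_finsetSum fun s _ => hsummabs s).symm
      _ = ∑' t : ℕ, γ ^ t * ∑ s, |dπ t s - dμ t s| := by
          refine tsum_congr fun t => ?_
          rw [Finset.mul_sum]
      _ ≤ ∑' t : ℕ, e * ((t : ℝ) * γ ^ t) := Summable.tsum_le_tsum hbound hsumLHS hsumRHS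
      _ = e * (γ / (1 - γ) ^ 2) := by
          rw [tsum_mul_left, tsum_coe_mul_geometric_of_norm_lt_one hγabs]
      _ = γ * e / (1 - γ) ^ 2 := by ring
  refine ⟨main ε hTV, ?_⟩
  -- second bound via Pinsker
  set K : ℝ := Finset.univ.sup' Finset.univ_nonempty
    (fun s => ∑ a, μ s a * Real.log (μ s a / π s a)) with hKdef
  have hpink : ∀ s : S, (∑ a, |π s a - μ s a|)^2 ≤ 2 * K := by
    intro s
    refine (dsd_pinsker (π s) (μ s) (hπ_pos s) (hπ_sum s) (hμ_nonneg s) (hμ_sum s)).trans ?_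
    have : (∑ a, μ s a * Real.log (μ s a / π s a)) ≤ K := by
      rw [hKdef]
      exact Finset.le_sup' (fun s => ∑ a, μ s a * Real.log (μ s a / π s a))
        (Finset.mem_univ s)
    linarith
  have hK0 : 0 ≤ K := by
    have := hpink (Classical.arbitrary S)
    nlinarith [sq_nonneg (∑ a, |π (Classical.arbitrary S) a - μ (Classical.arbitrary S) a|)]
  have hTV' : ∀ s, ∑ a, |π s a - μ s a| ≤ Real.sqrt (2 * K) := by
    intro s
    have h1 : ∑ a, |π s a - μ s a| = Real.sqrt ((∑ a, |π s a - μ s a|)^2) :=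
      (Real.sqrt_sq (Finset.sum_nonneg fun a _ => abs_nonneg _)).symm
    rw [h1]
    exact Real.sqrt_le_sqrt (hpink s)
  have h2 := main (Real.sqrt (2 * K)) hTV'
  have hsqrt : Real.sqrt (2 * K) = 2 * Real.sqrt ((1/2) * K) := by
    rw [show (2 : ℝ) * K = 4 * ((1/2) * K) by ring,
      show (4 : ℝ) * ((1/2) * K) = 2^2 * ((1/2) * K) by norm_num,
      Real.sqrt_mul (by positivity), Real.sqrt_sq (by norm_num : (0:ℝ) ≤ 2)]
  rw [hsqrt] at h2
  calc ∑ s, |Dπ s - Dμ s| ≤ γ * (2 * Real.sqrt ((1/2) * K)) / (1 - γ) ^ 2 := h2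
    _ = (2 * γ / (1 - γ) ^ 2) * Real.sqrt ((1/2) * K) := by ring
end

section
/- (Decomposition underlying the bias-corrected gradient) For any function g : A → ℝⁿ on a finite action set, probability distributions π and μ on A with μ(a) > 0 for all a, ρ(a) = π(a)/μ(a), and any threshold c ≥ 0: E_{a∼π}[(1 − c/ρ(a))₊ g(a)] + E_{a∼μ}[min(ρ(a), c) g(a)] = E_{a∼π}[g(a)], where (x)₊ = max(x,0). -/
/-- The ACER truncation-with-bias-correction identity: for `g : A → ℝⁿ` on a
finite action set, probability distributions `π` and `μ` with `μ a > 0`,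
`ρ a = π a / μ a`, and threshold `c ≥ 0`,
`E_{a∼π}[(1 − c/ρ(a))₊ g(a)] + E_{a∼μ}[min(ρ(a), c) g(a)] = E_{a∼π}[g(a)]`. -/
theorem acer_bias_correction_identity
    {A : Type*} [Fintype A] {n : ℕ}
    (π μ : A → ℝ)
    (hπ_nonneg : ∀ a, 0 ≤ π a) (hπ_sum : ∑ a, π a = 1)
    (hμ_pos : ∀ a, 0 < μ a) (hμ_sum : ∑ a, μ a = 1)
    (c : ℝ) (hc : 0 ≤ c)
    (ρ : A → ℝ) (hρ : ∀ a, ρ a = π a / μ a)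
    (g : A → EuclideanSpace ℝ (Fin n)) :
    (∑ a, (π a * max (1 - c / ρ a) 0) • g a) +
      (∑ a, (μ a * min (ρ a) c) • g a) = ∑ a, (π a) • g a := by
  rw [← Finset.sum_add_distrib]
  apply Finset.sum_congr rfl
  intro a _
  rw [← add_smul]
  congr 1
  have hμ := hμ_pos a
  rcases eq_or_lt_of_le (hπ_nonneg a) with h0 | hπ
  · have hρ0 : ρ a = 0 := by rw [hρ, ← h0]; simp
    rw [hρ0, ← h0]
    simp [min_eq_left hc]
  · have hρpos : 0 < ρ a := by rw [hρ]; positivity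
    have hπμ : π a = ρ a * μ a := by rw [hρ]; field_simp
    rcases le_or_gt (ρ a) c with h | h
    · have : 1 - c / ρ a ≤ 0 := by
        rw [sub_nonpos]; exact (one_le_div hρpos).mpr h
      rw [max_eq_right this, min_eq_left h]
      rw [hπμ]; ring
    · have h1 : 0 ≤ 1 - c / ρ a := by
        rw [sub_nonneg]; exact (div_le_one hρpos).mpr h.le
      rw [max_eq_left h1, min_eq_right h.le, hπμ]
      field_simp
      ring
end

section
/- The clipped importance ratio ρ̄_c = min(ρ, c) introduces a bias: for any g : A → ℝⁿ, E_{a∼μ}[min(ρ(a),c) g(a)] − E_{a∼π}[g(a)] = −E_{a∼π}[(1 − c/ρ(a))₊ g(a)], and if ‖g(a)‖ ≤ M for all a, this bias is bounded in norm by M · ∑_{a : ρ(a) > c} (π(a) − c μ(a)). -/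
open Finset

/-- Bias of the clipped importance ratio `ρ̄_c = min(ρ, c)`: for any
`g : A → ℝⁿ`,
`E_{a∼μ}[min(ρ a, c) g a] − E_{a∼π}[g a] = −E_{a∼π}[(1 − c/ρ a)₊ g a]`, and if
`‖g a‖ ≤ M` for all `a`, this bias is bounded in norm by
`M ∑_{a : ρ a > c} (π a − c μ a)`. -/
theorem clipped_is_bias
    {A : Type*} [Fintype A] {n : ℕ}
    (π μ : A → ℝ)
    (hπ_nonneg : ∀ a, 0 ≤ π a) (hπ_sum : ∑ a, π a = 1)
    (hμ_pos : ∀ a, 0 < μ a) (hμ_sum : ∑ a, μ a = 1)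
    (c : ℝ) (hc : 0 ≤ c)
    (ρ : A → ℝ) (hρ : ∀ a, ρ a = π a / μ a)
    (g : A → EuclideanSpace ℝ (Fin n)) (M : ℝ) (hM : ∀ a, ‖g a‖ ≤ M) :
    (∑ a, (μ a * min (ρ a) c) • g a) - (∑ a, (π a) • g a) =
      -(∑ a, (π a * max (1 - c / ρ a) 0) • g a) ∧
    ‖(∑ a, (μ a * min (ρ a) c) • g a) - (∑ a, (π a) • g a)‖ ≤
      M * ∑ a ∈ Finset.univ.filter (fun a => c < ρ a), (π a - c * μ a) := by
  -- pointwise coefficient identities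
  have hmin : ∀ a, μ a * min (ρ a) c = min (π a) (c * μ a) := by
    intro a
    have hμ := hμ_pos a
    rw [hρ, mul_min_of_nonneg _ _ hμ.le, mul_div_cancel₀ _ hμ.ne', mul_comm]
  have hmax : ∀ a, π a * max (1 - c / ρ a) 0 = max (π a - c * μ a) 0 := by
    intro a
    have hμ := hμ_pos a
    rcases eq_or_lt_of_le (hπ_nonneg a) with h | h
    · have h0 : (0:ℝ) ≤ c * μ a := mul_nonneg hc hμ.le
      simp [← h, max_eq_right (by linarith : π a - c * μ a ≤ 0), h0]
    · rw [hρ, mul_max_of_nonneg _ _ h.le, mul_zero]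
      congr 1
      field_simp
  have hkey : ∀ a, μ a * min (ρ a) c - π a = -(π a * max (1 - c / ρ a) 0) := by
    intro a
    rw [hmin a, hmax a]
    rcases le_total (π a) (c * μ a) with h | h
    · rw [min_eq_left h, max_eq_right (by linarith)]; ring
    · rw [min_eq_right h, max_eq_left (by linarith)]; ring
  have heq : (∑ a, (μ a * min (ρ a) c) • g a) - (∑ a, (π a) • g a) =
      -(∑ a, (π a * max (1 - c / ρ a) 0) • g a) := by
    rw [← Finset.sum_sub_distrib, ← Finset.sum_neg_distrib]
    refine Finset.sum_congr rfl fun a _ => ?_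
    rw [← sub_smul, hkey a, neg_smul]
  refine ⟨heq, ?_⟩
  rw [heq, norm_neg]
  calc ‖∑ a, (π a * max (1 - c / ρ a) 0) • g a‖
      ≤ ∑ a, ‖(π a * max (1 - c / ρ a) 0) • g a‖ := norm_sum_le _ _
    _ ≤ ∑ a, (π a * max (1 - c / ρ a) 0) * M := by
        refine Finset.sum_le_sum fun a _ => ?_
        rw [norm_smul, Real.norm_eq_abs, abs_of_nonneg
          (mul_nonneg (hπ_nonneg a) (le_max_right _ _))]
        exact mul_le_mul_of_nonneg_left (hM a)
          (mul_nonneg (hπ_nonneg a) (le_max_right _ _))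
    _ = M * ∑ a, max (π a - c * μ a) 0 := by
        rw [Finset.mul_sum]
        exact Finset.sum_congr rfl fun a _ => by rw [hmax a, mul_comm]
    _ = M * ∑ a ∈ Finset.univ.filter (fun a => c < ρ a), (π a - c * μ a) := by
        congr 1
        rw [Finset.sum_filter]
        refine Finset.sum_congr rfl fun a _ => ?_
        have hμ := hμ_pos a
        have hiff : c < ρ a ↔ c * μ a < π a := by
          rw [hρ, lt_div_iff₀ hμ]
        by_cases h : c < ρ a
        · rw [if_pos h, max_eq_left (by linarith [hiff.mp h])]
        · rw [if_neg h]
          have : π a ≤ c * μ a := by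
            by_contra hco; exact h (hiff.mpr (lt_of_not_ge hco))
          rw [max_eq_right (by linarith)]
end
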